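/- arXiv:math/9806130 — 4 statements merged into one kernel-verified Lean document; each statement's English description precedes it below -/
import Mathlib

section
/- Let A be a weak *-Hopf algebra and M a unital ℂ-algebra with a linear map ▷ : A⊗M → M satisfying (ab)▷m = a▷(b▷m), 1_A▷m = m, and a▷(mn) = Σ(a₍₁₎▷m)(a₍₂₎▷n) for all a,b ∈ A and m,n ∈ M. Then the following equivalences hold: condition (i) a▷1_M = Σ(a₍₁₎·S(a₍₂₎))▷1_M for all a is equivalent to condition (iii) (ab)▷1_M = Σ ε(a₍₁₎·b)·(a₍₂₎▷1_M) for all a,b; and condition (ii) a▷1_M = Σ(a₍₂₎·S⁻¹(a₍₁₎))▷1_M for all a is equivalent to condition (iv) (ab)▷1_M = Σ (a₍₁₎▷1_M)·ε(a₍₂₎·b) for all a,b. If moreover M is a *-algebra and (a▷m)* = (S(a))*▷m* for all a ∈ A, m ∈ M, then all four conditions (i)–(iv) are equivalent. -/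
open scoped TensorProduct

noncomputable section

/-- The componentwise star operation on a tensor product of star algebras,
as an additive map (it is conjugate-linear, hence not a `LinearMap`). -/
def tensorStar (A B : Type) [Ring A] [Algebra ℂ A] [StarRing A] [StarModule ℂ A]
    [Ring B] [Algebra ℂ B] [StarRing B] [StarModule ℂ B] :
    A ⊗[ℂ] B →+ A ⊗[ℂ] B :=
  TensorProduct.liftAddHom
    (AddMonoidHom.mk'
      (fun a => AddMonoidHom.mk' (fun b => star a ⊗ₜ[ℂ] star b)
        (fun x y => by
          show star a ⊗ₜ[ℂ] star (x + y) = star a ⊗ₜ[ℂ] star x + star a ⊗ₜ[ℂ] star y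
          rw [star_add, TensorProduct.tmul_add]))
      (fun x y => by
        ext b
        show star (x + y) ⊗ₜ[ℂ] star b = star x ⊗ₜ[ℂ] star b + star y ⊗ₜ[ℂ] star b
        rw [star_add, TensorProduct.add_tmul]))
    (fun r a b => by
      show star (r • a) ⊗ₜ[ℂ] star b = star a ⊗ₜ[ℂ] star (r • b)
      rw [star_smul, star_smul, TensorProduct.smul_tmul])

/-- A finite dimensional weak `*`-Hopf algebra over `ℂ` (axioms of [BNS]),
together with the derived properties of the antipode (which follow from the
axioms and are included as fields for convenience). -/
structure WeakHopfAlgebra (A : Type) [Ring A] [Algebra ℂ A] [StarRing A] [StarModule ℂ A] where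
  Δ : A →ₗ[ℂ] A ⊗[ℂ] A
  ε : A →ₗ[ℂ] ℂ
  S : A →ₗ[ℂ] A
  Sinv : A →ₗ[ℂ] A
  finite : FiniteDimensional ℂ A
  Δ_mul : ∀ x y : A, Δ (x * y) = Δ x * Δ y
  Δ_star : ∀ x : A, Δ (star x) = tensorStar A A (Δ x)
  coassoc : ∀ x : A,
    (TensorProduct.assoc ℂ A A A) ((TensorProduct.map Δ (LinearMap.id : A →ₗ[ℂ] A)) (Δ x))
      = (TensorProduct.map (LinearMap.id : A →ₗ[ℂ] A) Δ) (Δ x)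
  counit_left : ∀ x : A,
    (TensorProduct.lid ℂ A) ((TensorProduct.map ε (LinearMap.id : A →ₗ[ℂ] A)) (Δ x)) = x
  counit_right : ∀ x : A,
    (TensorProduct.rid ℂ A) ((TensorProduct.map (LinearMap.id : A →ₗ[ℂ] A) ε) (Δ x)) = x
  unit_weak :
    (Δ 1 ⊗ₜ[ℂ] (1 : A)) * ((TensorProduct.assoc ℂ A A A).symm ((1 : A) ⊗ₜ[ℂ] Δ 1))
      = (TensorProduct.map Δ (LinearMap.id : A →ₗ[ℂ] A)) (Δ 1)
  unit_weak' :
    ((TensorProduct.assoc ℂ A A A).symm ((1 : A) ⊗ₜ[ℂ] Δ 1)) * (Δ 1 ⊗ₜ[ℂ] (1 : A))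
      = (TensorProduct.map Δ (LinearMap.id : A →ₗ[ℂ] A)) (Δ 1)
  counit_weak : ∀ x y z : A,
    ε (x * y * z) = (TensorProduct.lid ℂ ℂ)
      ((TensorProduct.map (ε ∘ₗ LinearMap.mulLeft ℂ x) (ε ∘ₗ LinearMap.mulRight ℂ z)) (Δ y))
  counit_weak' : ∀ x y z : A,
    ε (x * y * z) = (TensorProduct.lid ℂ ℂ)
      ((TensorProduct.map (ε ∘ₗ LinearMap.mulRight ℂ z) (ε ∘ₗ LinearMap.mulLeft ℂ x)) (Δ y))
  antipode_left : ∀ x : A,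
    LinearMap.mul' ℂ A ((TensorProduct.map S (LinearMap.id : A →ₗ[ℂ] A)) (Δ x))
      = (TensorProduct.rid ℂ A)
          ((TensorProduct.map (LinearMap.id : A →ₗ[ℂ] A) (ε ∘ₗ LinearMap.mulLeft ℂ x)) (Δ 1))
  antipode_right : ∀ x : A,
    LinearMap.mul' ℂ A ((TensorProduct.map (LinearMap.id : A →ₗ[ℂ] A) S) (Δ x))
      = (TensorProduct.lid ℂ A)
          ((TensorProduct.map (ε ∘ₗ LinearMap.mulRight ℂ x) (LinearMap.id : A →ₗ[ℂ] A)) (Δ 1))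
  antipode_mid : ∀ x : A,
    LinearMap.mul' ℂ A
      ((TensorProduct.map (LinearMap.mul' ℂ A ∘ₗ TensorProduct.map S (LinearMap.id : A →ₗ[ℂ] A)) S)
        ((TensorProduct.map Δ (LinearMap.id : A →ₗ[ℂ] A)) (Δ x))) = S x
  S_Sinv : ∀ x : A, S (Sinv x) = x
  Sinv_S : ∀ x : A, Sinv (S x) = x
  S_antimul : ∀ x y : A, S (x * y) = S y * S x
  S_anticomul : ∀ x : A, Δ (S x) = (TensorProduct.comm ℂ A A) ((TensorProduct.map S S) (Δ x))
  S_star : ∀ x : A, star (S (star x)) = Sinv x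

/-- The set of elements commuting with everything. -/
def centerSet (R : Type) [Mul R] : Set R := {z | ∀ r : R, z * r = r * z}

namespace WeakHopfAlgebra

variable {A : Type} [Ring A] [Algebra ℂ A] [StarRing A] [StarModule ℂ A]

/-- `Σ x₍₁₎ · S(x₍₂₎)`. -/
def swIdS (W : WeakHopfAlgebra A) (x : A) : A :=
  LinearMap.mul' ℂ A ((TensorProduct.map (LinearMap.id : A →ₗ[ℂ] A) W.S) (W.Δ x))

/-- `Σ S(x₍₁₎) · x₍₂₎`. -/
def swSId (W : WeakHopfAlgebra A) (x : A) : A :=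
  LinearMap.mul' ℂ A ((TensorProduct.map W.S (LinearMap.id : A →ₗ[ℂ] A)) (W.Δ x))

/-- `Σ x₍₂₎ · S⁻¹(x₍₁₎)`. -/
def swIdSinv (W : WeakHopfAlgebra A) (x : A) : A :=
  LinearMap.mul' ℂ A
    ((TensorProduct.map (LinearMap.id : A →ₗ[ℂ] A) W.Sinv) ((TensorProduct.comm ℂ A A) (W.Δ x)))

/-- `Σ S⁻¹(x₍₂₎) · x₍₁₎`. -/
def swSinvId (W : WeakHopfAlgebra A) (x : A) : A :=
  LinearMap.mul' ℂ A
    ((TensorProduct.map W.Sinv (LinearMap.id : A →ₗ[ℂ] A)) ((TensorProduct.comm ℂ A A) (W.Δ x)))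

/-- The left subalgebra `A_L = {(φ ⊗ id)(Δ 1) : φ ∈ A*}`. -/
def AL (W : WeakHopfAlgebra A) : Set A :=
  {a | ∃ φ : A →ₗ[ℂ] ℂ,
    a = (TensorProduct.lid ℂ A) ((TensorProduct.map φ (LinearMap.id : A →ₗ[ℂ] A)) (W.Δ 1))}

/-- The right subalgebra `A_R = {(id ⊗ φ)(Δ 1) : φ ∈ A*}`. -/
def AR (W : WeakHopfAlgebra A) : Set A :=
  {a | ∃ φ : A →ₗ[ℂ] ℂ,
    a = (TensorProduct.rid ℂ A) ((TensorProduct.map (LinearMap.id : A →ₗ[ℂ] A) φ) (W.Δ 1))}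

/-- A left integral: `a · l = Σ a₍₁₎ S(a₍₂₎) · l` for all `a`. -/
def IsLeftIntegral (W : WeakHopfAlgebra A) (l : A) : Prop := ∀ a : A, a * l = W.swIdS a * l

/-- A right integral: `r · a = r · Σ S(a₍₁₎) a₍₂₎` for all `a`. -/
def IsRightIntegral (W : WeakHopfAlgebra A) (r : A) : Prop := ∀ a : A, r * a = r * W.swSId a

/-- A normalized Haar integral. -/
def IsHaar (W : WeakHopfAlgebra A) (h : A) : Prop :=
  W.IsLeftIntegral h ∧ W.IsRightIntegral h ∧ W.swSId h = 1 ∧ W.swIdS h = 1 ∧ W.S h = h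

/-- The canonical left action of a functional `λ ∈ A*` on `A`:
`λ ⇀ a = Σ a₍₁₎ · ⟨λ, a₍₂₎⟩`. -/
def lact (W : WeakHopfAlgebra A) (lam : A →ₗ[ℂ] ℂ) : A →ₗ[ℂ] A :=
  (TensorProduct.rid ℂ A).toLinearMap ∘ₗ
    (TensorProduct.map (LinearMap.id : A →ₗ[ℂ] A) lam) ∘ₗ W.Δ

/-- `λ ∈ A*` is a left integral of the dual weak Hopf algebra:
`λ ⇀ a ∈ A_L` for all `a ∈ A`. -/
def IsDualLeftIntegral (W : WeakHopfAlgebra A) (lam : A →ₗ[ℂ] ℂ) : Prop :=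
  ∀ a : A, W.lact lam a ∈ W.AL

/-- A dual pair of left integrals `(l, λ)`. -/
def IsDualPair (W : WeakHopfAlgebra A) (l : A) (lam : A →ₗ[ℂ] ℂ) : Prop :=
  W.IsLeftIntegral l ∧ W.IsDualLeftIntegral lam ∧
  W.lact lam l = 1 ∧
  (∀ a : A,
    (TensorProduct.rid ℂ A)
      ((TensorProduct.map (LinearMap.id : A →ₗ[ℂ] A) (lam ∘ₗ LinearMap.mulLeft ℂ a)) (W.Δ l))
      = W.S a) ∧
  (∀ a : A,
    (TensorProduct.lid ℂ A)
      ((TensorProduct.map (lam ∘ₗ LinearMap.mulRight ℂ a ∘ₗ W.Sinv)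
        (LinearMap.id : A →ₗ[ℂ] A)) (W.Δ l)) = a)

end WeakHopfAlgebra

/-- A (left) module `*`-algebra over a weak `*`-Hopf algebra. -/
structure ModuleAlgebra {A : Type} [Ring A] [Algebra ℂ A] [StarRing A] [StarModule ℂ A]
    (W : WeakHopfAlgebra A) (M : Type) [Ring M] [Algebra ℂ M] [StarRing M] [StarModule ℂ M] where
  act : A →ₗ[ℂ] M →ₗ[ℂ] M
  act_mul : ∀ (a b : A) (m : M), act (a * b) m = act a (act b m)
  act_one : ∀ m : M, act 1 m = m
  act_mul' : ∀ (a : A) (m n : M),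
    act a (m * n) = LinearMap.mul' ℂ M ((TensorProduct.map (act.flip m) (act.flip n)) (W.Δ a))
  act_star : ∀ (a : A) (m : M), star (act a m) = act (star (W.S a)) (star m)
  act_unit : ∀ a : A, act a 1 = act (W.swIdS a) 1

namespace ModuleAlgebra

variable {A : Type} [Ring A] [Algebra ℂ A] [StarRing A] [StarModule ℂ A]
variable {M : Type} [Ring M] [Algebra ℂ M] [StarRing M] [StarModule ℂ M]
variable {W : WeakHopfAlgebra A}

/-- `M_R = A ▷ 1_M`. -/
def MR (MA : ModuleAlgebra W M) : Set M := Set.range fun a : A => MA.act a 1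

/-- The fixed point algebra `M^A`. -/
def fixed (MA : ModuleAlgebra W M) : Set M :=
  {n | ∀ (a : A) (m : M), MA.act a (m * n) = MA.act a m * n}

end ModuleAlgebra

section Crossed

variable {A : Type} [Ring A] [Algebra ℂ A] [StarRing A] [StarModule ℂ A]
variable {M : Type} [Ring M] [Algebra ℂ M] [StarRing M] [StarModule ℂ M]
variable {W : WeakHopfAlgebra A}

/-- The subspace of `M ⊗ A` by which one divides to form the crossed product
`M ⋊ A = M ⊗_{A_L} A`. -/
def crossedRel (MA : ModuleAlgebra W M) : Submodule ℂ (M ⊗[ℂ] A) :=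
  Submodule.span ℂ
    {x | ∃ (m : M) (a b : A), b ∈ W.AL ∧
      x = (m * MA.act b 1) ⊗ₜ[ℂ] a - m ⊗ₜ[ℂ] (b * a)}

/-- The crossed product `M ⋊ A` as a vector space. -/
abbrev Crossed (MA : ModuleAlgebra W M) : Type := (M ⊗[ℂ] A) ⧸ crossedRel MA

/-- The canonical projection `M ⊗ A → M ⋊ A`; `cmk MA (m ⊗ₜ a)` is `m ⋊ a`. -/
def cmk (MA : ModuleAlgebra W M) : M ⊗[ℂ] A →ₗ[ℂ] Crossed MA := (crossedRel MA).mkQ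

/-- The embedding `M → M ⋊ A`, `m ↦ m ⋊ 1`. -/
def iM (MA : ModuleAlgebra W M) : M →ₗ[ℂ] Crossed MA :=
  cmk MA ∘ₗ (TensorProduct.mk ℂ M A).flip (1 : A)

/-- The map `A → M ⋊ A`, `a ↦ 1 ⋊ a`. -/
def iA (MA : ModuleAlgebra W M) : A →ₗ[ℂ] Crossed MA :=
  cmk MA ∘ₗ (TensorProduct.mk ℂ M A) (1 : M)

/-- The unit `1 ⋊ 1` of `M ⋊ A`. -/
def oneC (MA : ModuleAlgebra W M) : Crossed MA := cmk MA ((1 : M) ⊗ₜ[ℂ] (1 : A))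

/-- The multiplication of the crossed product `M ⋊ A`
(whose existence is the content of Theorem 3.1), as a bundled bilinear map
together with its defining formula on generators:
`(m ⋊ a)(m' ⋊ a') = Σ m (a₍₁₎ ▷ m') ⋊ a₍₂₎ a'`. -/
structure CrossedMul (MA : ModuleAlgebra W M) where
  mul : Crossed MA →ₗ[ℂ] Crossed MA →ₗ[ℂ] Crossed MA
  mul_def : ∀ (m m' : M) (a a' : A),
    mul (cmk MA (m ⊗ₜ[ℂ] a)) (cmk MA (m' ⊗ₜ[ℂ] a'))
      = cmk MA ((TensorProduct.map ((LinearMap.mulLeft ℂ m) ∘ₗ (MA.act.flip m'))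
          (LinearMap.mulRight ℂ a')) (W.Δ a))

/-- The star operation of the crossed product `M ⋊ A`
(whose existence is part of Theorem 3.1):
`(m ⋊ a)* = Σ (a₍₁₎* ▷ m*) ⋊ a₍₂₎*`. -/
structure CrossedStar (MA : ModuleAlgebra W M) where
  st : Crossed MA →+ Crossed MA
  st_smul : ∀ (c : ℂ) (x : Crossed MA), st (c • x) = (starRingEnd ℂ c) • st x
  st_def : ∀ (m : M) (a : A),
    st (cmk MA (m ⊗ₜ[ℂ] a))
      = cmk MA ((TensorProduct.map (MA.act.flip (star m)) (LinearMap.id : A →ₗ[ℂ] A))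
          (W.Δ (star a)))

/-- The multiplication on `(M ⋊ A) ⊗ B` induced by a crossed product
multiplication on `M ⋊ A` and the algebra structure of `B`. -/
def mulT (MA : ModuleAlgebra W M) (CS : CrossedMul MA) (B : Type) [Ring B] [Algebra ℂ B] :
    Crossed MA ⊗[ℂ] B →ₗ[ℂ] Crossed MA ⊗[ℂ] B →ₗ[ℂ] Crossed MA ⊗[ℂ] B :=
  TensorProduct.lift
    ((TensorProduct.mapBilinear (RingHom.id ℂ) (Crossed MA) B (Crossed MA) B).compl₁₂ CS.mul
      (LinearMap.mul ℂ B))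

end Crossed

/-!
Everything is a statement about the linear map `f a = a ▷ 1`, and reduces to two identities in
`A`: for `ε_t(a) = Σ a₍₁₎S(a₍₂₎) = Σ ε(1₍₁₎a)1₍₂₎` the weak multiplicativity of `ε` gives
`ε_t(ab) = Σ ε(a₍₁₎b) ε_t(a₍₂₎)`, and likewise `ε'(ab) = Σ ε'(a₍₁₎) ε(a₍₂₎b)` for
`ε'(a) = Σ a₍₂₎S⁻¹(a₍₁₎)`, once one knows `ε'(a) = Σ 1₍₁₎ε(1₍₂₎a)`. The latter follows from
`ε(c S(b)) = ε(c S(b₍₁₎) b₍₂₎)` (a consequence of `S = S * id * S`) together with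
`Δ(1) = Σ 1₍₁₎ ⊗ ε(1₍₂₎1'₍₁₎) 1'₍₂₎`.

For the star part, `θ = star ∘ S` is a multiplicative, anti-comultiplicative bijection of `A`
with `ε ∘ θ = conj ∘ ε`, and compatibility of the action says `f ∘ θ = star ∘ f`; conjugating
condition (iii) at `(θ a, θ b)` by `star` turns it into condition (iv) at `(a, b)`.
-/

open TensorProduct LinearMap

namespace WeakHopfAlgebra

variable {A : Type} [Ring A] [Algebra ℂ A] [StarRing A] [StarModule ℂ A] (W : WeakHopfAlgebra A)

def sweedler (x : A) : Finset (A × A) := (exists_finset (W.Δ x)).choose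

theorem Δ_eq_sum (x : A) : W.Δ x = ∑ p ∈ W.sweedler x, p.1 ⊗ₜ[ℂ] p.2 :=
  (exists_finset (W.Δ x)).choose_spec

theorem lid_map_Δ {N : Type} [AddCommGroup N] [Module ℂ N] (φ : A →ₗ[ℂ] ℂ) (f : A →ₗ[ℂ] N)
    (x : A) :
    TensorProduct.lid ℂ N (map φ f (W.Δ x)) = ∑ p ∈ W.sweedler x, φ p.1 • f p.2 := by
  simp [W.Δ_eq_sum x, map_sum]

theorem rid_map_Δ {N : Type} [AddCommGroup N] [Module ℂ N] (f : A →ₗ[ℂ] N) (φ : A →ₗ[ℂ] ℂ)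
    (x : A) :
    TensorProduct.rid ℂ N (map f φ (W.Δ x)) = ∑ p ∈ W.sweedler x, φ p.2 • f p.1 := by
  simp [W.Δ_eq_sum x, map_sum]

theorem sum_counit_smul_fst (x : A) : ∑ p ∈ W.sweedler x, W.ε p.1 • p.2 = x := by
  simpa [W.lid_map_Δ] using W.counit_left x

theorem sum_counit_smul_snd (x : A) : ∑ p ∈ W.sweedler x, W.ε p.2 • p.1 = x := by
  simpa [W.rid_map_Δ] using W.counit_right x

theorem counit_mul_mul (x y z : A) :
    W.ε (x * y * z) = ∑ p ∈ W.sweedler y, W.ε (x * p.1) * W.ε (p.2 * z) := by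
  simpa [W.lid_map_Δ] using W.counit_weak x y z

theorem counit_mul_mul' (x y z : A) :
    W.ε (x * y * z) = ∑ p ∈ W.sweedler y, W.ε (p.1 * z) * W.ε (x * p.2) := by
  simpa [W.lid_map_Δ, mul_comm] using W.counit_weak' x y z

theorem swIdS_eq_sum_one (x : A) : W.swIdS x = ∑ p ∈ W.sweedler 1, W.ε (p.1 * x) • p.2 := by
  simpa [swIdS, W.lid_map_Δ] using W.antipode_right x

theorem swSId_eq_sum_one (x : A) : W.swSId x = ∑ p ∈ W.sweedler 1, W.ε (x * p.2) • p.1 := by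
  simpa [swSId, W.rid_map_Δ] using W.antipode_left x

theorem swSId_eq_sum (x : A) : W.swSId x = ∑ p ∈ W.sweedler x, W.S p.1 * p.2 := by
  simp [swSId, W.Δ_eq_sum x, map_sum]

theorem counit_mul_swIdS (x y : A) : W.ε (x * W.swIdS y) = W.ε (x * y) := by
  rw [W.swIdS_eq_sum_one, ← mul_one x, W.counit_mul_mul' x 1 y]
  simp [Finset.mul_sum, map_sum, mul_comm]

theorem S_eq_sum (b : A) : W.S b = ∑ q ∈ W.sweedler b, W.S q.1 * W.swIdS q.2 := by
  have hassoc : mul' ℂ A ∘ₗ map (mul' ℂ A ∘ₗ map W.S LinearMap.id) W.S =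
      (mul' ℂ A ∘ₗ map W.S (mul' ℂ A ∘ₗ map LinearMap.id W.S)) ∘ₗ
        (TensorProduct.assoc ℂ A A A).toLinearMap :=
    ext_threefold fun x y z => by simp [mul_assoc]
  calc W.S b = (mul' ℂ A ∘ₗ map (mul' ℂ A ∘ₗ map W.S LinearMap.id) W.S)
        (map W.Δ LinearMap.id (W.Δ b)) := (W.antipode_mid b).symm
    _ = (mul' ℂ A ∘ₗ map W.S (mul' ℂ A ∘ₗ map LinearMap.id W.S))
        (map LinearMap.id W.Δ (W.Δ b)) := by rw [hassoc, ← W.coassoc]; rfl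
    _ = ∑ q ∈ W.sweedler b, W.S q.1 * W.swIdS q.2 := by simp [W.Δ_eq_sum b, map_sum, swIdS]

theorem counit_mul_S (c b : A) : W.ε (c * W.S b) = W.ε (c * W.swSId b) := by
  rw [W.S_eq_sum, W.swSId_eq_sum]
  simp only [Finset.mul_sum, map_sum, ← mul_assoc, W.counit_mul_swIdS]

theorem counit_S (b : A) : W.ε (W.S b) = W.ε b := by
  rw [← one_mul (W.S b), counit_mul_S, one_mul, W.swSId_eq_sum_one]
  conv_rhs => rw [← mul_one b, ← W.sum_counit_smul_fst 1]
  simp [Finset.mul_sum, map_sum, mul_comm]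

theorem sum_counit_mul_smul_tmul_eq_Δ_one :
    ∑ p ∈ W.sweedler 1, ∑ p' ∈ W.sweedler 1, W.ε (p.2 * p'.1) • (p.1 ⊗ₜ[ℂ] p'.2) = W.Δ 1 := by
  set Φ : (A ⊗[ℂ] A) ⊗[ℂ] A →ₗ[ℂ] A ⊗[ℂ] A :=
    map ((TensorProduct.rid ℂ A).toLinearMap ∘ₗ map LinearMap.id W.ε) LinearMap.id
  have hcounit : (TensorProduct.rid ℂ A).toLinearMap ∘ₗ map LinearMap.id W.ε ∘ₗ W.Δ =
      LinearMap.id := LinearMap.ext W.counit_right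
  have hright : Φ (map W.Δ LinearMap.id (W.Δ 1)) = W.Δ 1 := by
    rw [← LinearMap.comp_apply, ← map_comp, LinearMap.comp_assoc, hcounit]
    simp
  have hleft : Φ ((W.Δ 1 ⊗ₜ[ℂ] (1 : A)) *
      (TensorProduct.assoc ℂ A A A).symm ((1 : A) ⊗ₜ[ℂ] W.Δ 1)) =
      ∑ p ∈ W.sweedler 1, ∑ p' ∈ W.sweedler 1, W.ε (p.2 * p'.1) • (p.1 ⊗ₜ[ℂ] p'.2) := by
    rw [W.Δ_eq_sum 1, sum_tmul, tmul_sum, map_sum, Finset.sum_mul_sum]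
    simp [Φ, map_sum, Algebra.TensorProduct.tmul_mul_tmul, smul_tmul']
  rw [← hleft, W.unit_weak, hright]

theorem swIdSinv_S (b : A) : W.swIdSinv (W.S b) = W.swSId b := by
  simp [swIdSinv, swSId, W.S_anticomul, W.Δ_eq_sum b, map_sum, W.Sinv_S]

theorem swIdSinv_eq_sum_one (a : A) :
    W.swIdSinv a = ∑ p ∈ W.sweedler 1, W.ε (p.2 * a) • p.1 := by
  obtain ⟨b, rfl⟩ : ∃ b, W.S b = a := ⟨W.Sinv a, W.S_Sinv a⟩
  set Ψ : A ⊗[ℂ] A →ₗ[ℂ] A :=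
    (TensorProduct.rid ℂ A).toLinearMap ∘ₗ map LinearMap.id (W.ε ∘ₗ LinearMap.mulLeft ℂ b)
  calc W.swIdSinv (W.S b) = Ψ (W.Δ 1) := by
        simp [Ψ, W.swIdSinv_S, W.swSId_eq_sum_one, W.Δ_eq_sum 1, map_sum]
    _ = ∑ p ∈ W.sweedler 1, ∑ p' ∈ W.sweedler 1, (W.ε (p.2 * p'.1) * W.ε (b * p'.2)) • p.1 := by
        rw [← W.sum_counit_mul_smul_tmul_eq_Δ_one]
        simp [Ψ, map_sum, smul_smul]
    _ = ∑ p ∈ W.sweedler 1, W.ε (p.2 * W.S b) • p.1 := by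
        simp [W.counit_mul_S, W.swSId_eq_sum_one, Finset.mul_sum, map_sum, Finset.sum_smul,
          mul_comm]

theorem Δ_star_of_eq_sum {ι : Type} {s : Finset ι} {u v : ι → A} {x : A}
    (h : W.Δ x = ∑ i ∈ s, u i ⊗ₜ[ℂ] v i) :
    W.Δ (star x) = ∑ i ∈ s, star (u i) ⊗ₜ[ℂ] star (v i) := by
  simp [W.Δ_star, h, map_sum, tensorStar, liftAddHom_tmul]

-- `x ↦ conj (ε (star x))` is again a left counit, hence agrees with the right counit `ε`.
theorem counit_star (x : A) : W.ε (star x) = star (W.ε x) := by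
  have hleft : ∑ q ∈ W.sweedler x, star (W.ε (star q.1)) • q.2 = x := by
    have h := W.counit_left (star x)
    rw [W.Δ_star_of_eq_sum (W.Δ_eq_sum x), map_sum, map_sum] at h
    simpa [star_sum, star_smul] using congrArg star h
  rw [← star_star (W.ε (star x))]
  congr 1
  conv_lhs => rw [← W.sum_counit_smul_snd x]
  conv_rhs => rw [← hleft]
  simp [star_sum, map_sum, star_smul, mul_comm]

theorem Δ_star_S (a : A) :
    W.Δ (star (W.S a)) = ∑ q ∈ W.sweedler a, star (W.S q.2) ⊗ₜ[ℂ] star (W.S q.1) :=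
  W.Δ_star_of_eq_sum (by simp [W.S_anticomul, W.Δ_eq_sum a, map_sum])

theorem counit_star_S (x : A) : W.ε (star (W.S x)) = star (W.ε x) := by
  rw [counit_star, counit_S]

theorem swIdS_mul (a b : A) :
    W.swIdS (a * b) = ∑ q ∈ W.sweedler a, W.ε (q.1 * b) • W.swIdS q.2 := by
  simp only [W.swIdS_eq_sum_one, ← mul_assoc, W.counit_mul_mul', Finset.sum_smul,
    Finset.smul_sum, smul_smul]
  exact Finset.sum_comm

theorem swIdSinv_mul (a b : A) :
    W.swIdSinv (a * b) = ∑ q ∈ W.sweedler a, W.ε (q.2 * b) • W.swIdSinv q.1 := by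
  simp only [W.swIdSinv_eq_sum_one, ← mul_assoc, W.counit_mul_mul, Finset.sum_smul,
    Finset.smul_sum, smul_smul]
  rw [Finset.sum_comm]
  simp only [mul_comm]

section UnitConditions

variable {N : Type} [AddCommGroup N] [Module ℂ N] (f : A →ₗ[ℂ] N)

theorem apply_eq_apply_swIdS_iff :
    (∀ a : A, f a = f (W.swIdS a)) ↔
      ∀ a b : A, f (a * b) =
        TensorProduct.lid ℂ N (map (W.ε ∘ₗ LinearMap.mulRight ℂ b) f (W.Δ a)) := by
  simp only [W.lid_map_Δ, LinearMap.comp_apply, LinearMap.mulRight_apply]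
  constructor
  · intro h a b
    rw [h, W.swIdS_mul, map_sum]
    simp only [map_smul, ← h]
  · intro h a
    rw [← one_mul a, h, one_mul, W.swIdS_eq_sum_one, map_sum]
    simp only [map_smul]

theorem apply_eq_apply_swIdSinv_iff :
    (∀ a : A, f a = f (W.swIdSinv a)) ↔
      ∀ a b : A, f (a * b) =
        TensorProduct.rid ℂ N (map f (W.ε ∘ₗ LinearMap.mulRight ℂ b) (W.Δ a)) := by
  simp only [W.rid_map_Δ, LinearMap.comp_apply, LinearMap.mulRight_apply]
  constructor
  · intro h a b
    rw [h, W.swIdSinv_mul, map_sum]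
    simp only [map_smul, ← h]
  · intro h a
    rw [← one_mul a, h, one_mul, W.swIdSinv_eq_sum_one, map_sum]
    simp only [map_smul]

theorem lid_expansion_iff_rid_expansion [StarAddMonoid N] [StarModule ℂ N]
    (hf : ∀ a : A, f (star (W.S a)) = star (f a)) :
    (∀ a b : A, f (a * b) =
        TensorProduct.lid ℂ N (map (W.ε ∘ₗ LinearMap.mulRight ℂ b) f (W.Δ a))) ↔
      ∀ a b : A, f (a * b) =
        TensorProduct.rid ℂ N (map f (W.ε ∘ₗ LinearMap.mulRight ℂ b) (W.Δ a)) := by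
  have hmul (a b : A) : f (star (W.S a) * star (W.S b)) = star (f (a * b)) := by
    rw [← star_mul, ← W.S_antimul, hf]
  have hexp (a b : A) :
      TensorProduct.lid ℂ N
          (map (W.ε ∘ₗ LinearMap.mulRight ℂ (star (W.S b))) f (W.Δ (star (W.S a)))) =
        star (TensorProduct.rid ℂ N (map f (W.ε ∘ₗ LinearMap.mulRight ℂ b) (W.Δ a))) := by
    rw [W.Δ_star_S, W.rid_map_Δ, star_sum, map_sum, map_sum]
    refine Finset.sum_congr rfl fun q _ => ?_
    simp [← star_mul, ← W.S_antimul, W.counit_star_S, hf, star_smul]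
  constructor
  · intro h a b
    exact star_injective (by rw [← hmul, ← hexp, h])
  · intro h a b
    obtain ⟨a, rfl⟩ : ∃ a', star (W.S a') = a := ⟨W.Sinv (star a), by rw [W.S_Sinv, star_star]⟩
    obtain ⟨b, rfl⟩ : ∃ b', star (W.S b') = b := ⟨W.Sinv (star b), by rw [W.S_Sinv, star_star]⟩
    rw [hmul, hexp, h]

end UnitConditions

end WeakHopfAlgebra

theorem act_unit_conditions_equiv_general
    {A M : Type} [Ring A] [Algebra ℂ A] [StarRing A] [StarModule ℂ A]
    [Ring M] [Algebra ℂ M] [StarRing M] [StarModule ℂ M]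
    (W : WeakHopfAlgebra A) (act : A →ₗ[ℂ] M →ₗ[ℂ] M) :
    (((∀ a : A, act a 1 = act (W.swIdS a) 1) ↔
        (∀ a b : A, act (a * b) 1 =
          (TensorProduct.lid ℂ M)
            ((TensorProduct.map (W.ε ∘ₗ LinearMap.mulRight ℂ b) (act.flip 1)) (W.Δ a)))) ∧
      ((∀ a : A, act a 1 = act (W.swIdSinv a) 1) ↔
        (∀ a b : A, act (a * b) 1 =
          (TensorProduct.rid ℂ M)
            ((TensorProduct.map (act.flip 1) (W.ε ∘ₗ LinearMap.mulRight ℂ b)) (W.Δ a))))) ∧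
    ((∀ (a : A) (m : M), star (act a m) = act (star (W.S a)) (star m)) →
      (((∀ a : A, act a 1 = act (W.swIdS a) 1) ↔ (∀ a : A, act a 1 = act (W.swIdSinv a) 1)) ∧
        ((∀ a : A, act a 1 = act (W.swIdS a) 1) ↔
          (∀ a b : A, act (a * b) 1 =
            (TensorProduct.rid ℂ M)
              ((TensorProduct.map (act.flip 1) (W.ε ∘ₗ LinearMap.mulRight ℂ b)) (W.Δ a)))))) := by
  have h13 := W.apply_eq_apply_swIdS_iff (act.flip 1)
  have h24 := W.apply_eq_apply_swIdSinv_iff (act.flip 1)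
  refine ⟨⟨h13, h24⟩, fun hstar => ?_⟩
  have h34 := W.lid_expansion_iff_rid_expansion (act.flip 1) fun a => by
    simpa using (hstar a 1).symm
  exact ⟨h13.trans (h34.trans h24.symm), h13.trans h34⟩

/-- Corollary 2.4 of [NSW]: for a left action satisfying the module-algebra
axioms except the unit axiom, the four possible unit axioms
(i) `a ▷ 1 = Σ (a₍₁₎ S(a₍₂₎)) ▷ 1`, (iii) `(ab) ▷ 1 = Σ ε(a₍₁₎ b)·(a₍₂₎ ▷ 1)`,
(ii) `a ▷ 1 = Σ (a₍₂₎ S⁻¹(a₍₁₎)) ▷ 1`, (iv) `(ab) ▷ 1 = Σ (a₍₁₎ ▷ 1)·ε(a₍₂₎ b)`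
satisfy (i) ⟺ (iii) and (ii) ⟺ (iv); if moreover the action is compatible
with the star structures, then all four are equivalent. -/
theorem act_unit_conditions_equiv
    {A M : Type} [Ring A] [Algebra ℂ A] [StarRing A] [StarModule ℂ A]
    [Ring M] [Algebra ℂ M] [StarRing M] [StarModule ℂ M]
    (W : WeakHopfAlgebra A) (act : A →ₗ[ℂ] M →ₗ[ℂ] M)
    (act_mul : ∀ (a b : A) (m : M), act (a * b) m = act a (act b m))
    (act_one : ∀ m : M, act 1 m = m)
    (act_mul' : ∀ (a : A) (m n : M),
      act a (m * n)
        = LinearMap.mul' ℂ M ((TensorProduct.map (act.flip m) (act.flip n)) (W.Δ a))) :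
    (((∀ a : A, act a 1 = act (W.swIdS a) 1) ↔
        (∀ a b : A, act (a * b) 1 =
          (TensorProduct.lid ℂ M)
            ((TensorProduct.map (W.ε ∘ₗ LinearMap.mulRight ℂ b) (act.flip 1)) (W.Δ a)))) ∧
      ((∀ a : A, act a 1 = act (W.swIdSinv a) 1) ↔
        (∀ a b : A, act (a * b) 1 =
          (TensorProduct.rid ℂ M)
            ((TensorProduct.map (act.flip 1) (W.ε ∘ₗ LinearMap.mulRight ℂ b)) (W.Δ a))))) ∧
    ((∀ (a : A) (m : M), star (act a m) = act (star (W.S a)) (star m)) →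
      (((∀ a : A, act a 1 = act (W.swIdS a) 1) ↔ (∀ a : A, act a 1 = act (W.swIdSinv a) 1)) ∧
        ((∀ a : A, act a 1 = act (W.swIdS a) 1) ↔
          (∀ a b : A, act (a * b) 1 =
            (TensorProduct.rid ℂ M)
              ((TensorProduct.map (act.flip 1) (W.ε ∘ₗ LinearMap.mulRight ℂ b)) (W.Δ a)))))) :=
  act_unit_conditions_equiv_general W act
end
end

section
/- Let M be an A-module algebra over a weak *-Hopf algebra A. Then for all a ∈ A and m ∈ M one has (a▷1_M)·m = Σ (a₍₁₎·S(a₍₂₎))▷m; consequently (a▷1_M)·(b▷1_M) = Σ (a₍₁₎·S(a₍₂₎)·b)▷1_M for all a, b ∈ A, and M_R := A▷1_M is a unital subalgebra of M which is closed under the star operation. -/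
open scoped TensorProduct

noncomputable section

/-!
Write `ε_t(a) = Σ a₍₁₎ S(a₍₂₎)`. By the antipode axiom `ε_t(a) = Σ ε(1₍₁₎ a) 1₍₂₎` lies in
`A_L = (A* ⊗ id)(Δ 1)`, and the weak unit axiom `(Δ ⊗ id)(Δ 1) = (1 ⊗ Δ 1)(Δ 1 ⊗ 1)` gives
`Δ y = Δ 1 · (y ⊗ 1)` for every `y ∈ A_L`. Consequently
`y ▷ m = y ▷ (1 · m) = Σ (1₍₁₎ y ▷ 1)(1₍₂₎ ▷ m) = 1 ▷ ((y ▷ 1) m) = (y ▷ 1) m`,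
and with the module algebra axiom `a ▷ 1 = ε_t(a) ▷ 1` this yields `(a ▷ 1) m = ε_t(a) ▷ m`.
Taking `m = b ▷ 1` shows that `A ▷ 1` is closed under products; the star axiom gives
`(a ▷ 1)* = S(a)* ▷ 1`.
-/

namespace TensorProduct

variable {R A M N P : Type*} [CommSemiring R]

theorem apply_lid_map [AddCommMonoid M] [AddCommMonoid N] [AddCommMonoid P]
    [Module R M] [Module R N] [Module R P] (φ : M →ₗ[R] R) (f : N →ₗ[R] P) (w : M ⊗[R] N) :
    f (TensorProduct.lid R N (TensorProduct.map φ LinearMap.id w))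
      = TensorProduct.lid R P (TensorProduct.map φ LinearMap.id (TensorProduct.map LinearMap.id f w)) := by
  induction w using TensorProduct.induction_on <;> simp_all

theorem lid_map_assoc_one_tmul_mul_tmul_one [Semiring A] [Algebra R A] (φ : A →ₗ[R] R)
    (u v : A ⊗[R] A) :
    TensorProduct.lid R (A ⊗[R] A) (TensorProduct.map φ LinearMap.id
        (TensorProduct.assoc R A A A
          ((TensorProduct.assoc R A A A).symm (1 ⊗ₜ u) * (v ⊗ₜ 1))))
      = u * (TensorProduct.lid R A (TensorProduct.map φ LinearMap.id v) ⊗ₜ 1) := by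
  induction u using TensorProduct.induction_on with
  | zero => simp
  | add u u' hu hu' => simp only [TensorProduct.tmul_add, map_add, add_mul, hu, hu']
  | tmul u₁ u₂ =>
    induction v using TensorProduct.induction_on with
    | zero => simp
    | add v v' hv hv' =>
      simp only [TensorProduct.add_tmul, map_add, mul_add, hv, hv']
    | tmul v₁ v₂ =>
      simp [Algebra.TensorProduct.tmul_mul_tmul, TensorProduct.smul_tmul']

end TensorProduct

namespace WeakHopfAlgebra

variable {A : Type} [Ring A] [Algebra ℂ A] [StarRing A] [StarModule ℂ A]
  (W : WeakHopfAlgebra A)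

theorem swIdS_mem_AL (a : A) : W.swIdS a ∈ W.AL :=
  ⟨_, W.antipode_right a⟩

theorem Δ_of_mem_AL {y : A} (hy : y ∈ W.AL) : W.Δ y = W.Δ 1 * (y ⊗ₜ[ℂ] 1) := by
  obtain ⟨φ, rfl⟩ := hy
  rw [TensorProduct.apply_lid_map, ← W.coassoc, ← W.unit_weak',
    TensorProduct.lid_map_assoc_one_tmul_mul_tmul_one]

end WeakHopfAlgebra

namespace ModuleAlgebra

variable {A : Type} [Ring A] [Algebra ℂ A] [StarRing A] [StarModule ℂ A]
variable {M : Type} [Ring M] [Algebra ℂ M] [StarRing M] [StarModule ℂ M]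
variable {W : WeakHopfAlgebra A} (MA : ModuleAlgebra W M)

theorem mul'_map_act_mul_tmul_one (u : A ⊗[ℂ] A) (x : A) (m : M) :
    LinearMap.mul' ℂ M (TensorProduct.map (MA.act.flip 1) (MA.act.flip m) (u * (x ⊗ₜ[ℂ] 1)))
      = LinearMap.mul' ℂ M (TensorProduct.map (MA.act.flip (MA.act x 1)) (MA.act.flip m) u) := by
  induction u using TensorProduct.induction_on with
  | zero => simp
  | add u u' hu hu' => simp only [add_mul, map_add, hu, hu']
  | tmul u₁ u₂ => simp [Algebra.TensorProduct.tmul_mul_tmul, MA.act_mul]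

theorem act_of_mem_AL {y : A} (hy : y ∈ W.AL) (m : M) : MA.act y m = MA.act y 1 * m := by
  conv_lhs => rw [← one_mul m]
  rw [MA.act_mul', W.Δ_of_mem_AL hy, mul'_map_act_mul_tmul_one, ← MA.act_mul', MA.act_one]

theorem act_one_mul (a : A) (m : M) : MA.act a 1 * m = MA.act (W.swIdS a) m := by
  rw [MA.act_unit, ← MA.act_of_mem_AL (W.swIdS_mem_AL a)]

theorem act_one_mul_act_one (a b : A) : MA.act a 1 * MA.act b 1 = MA.act (W.swIdS a * b) 1 := by
  rw [act_one_mul, MA.act_mul]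

theorem star_act_one (a : A) : star (MA.act a 1) = MA.act (star (W.S a)) 1 := by
  rw [MA.act_star, star_one]

def starSubalgebraMR : StarSubalgebra ℂ M where
  carrier := MA.MR
  mul_mem' := by
    rintro _ _ ⟨a, rfl⟩ ⟨b, rfl⟩
    exact ⟨_, (MA.act_one_mul_act_one a b).symm⟩
  add_mem' := by
    rintro _ _ ⟨a, rfl⟩ ⟨b, rfl⟩
    exact ⟨a + b, by simp⟩
  algebraMap_mem' c := ⟨algebraMap ℂ A c, by simp [Algebra.algebraMap_eq_smul_one, MA.act_one]⟩
  star_mem' := by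
    rintro _ ⟨a, rfl⟩
    exact ⟨_, (MA.star_act_one a).symm⟩

theorem coe_starSubalgebraMR : (MA.starSubalgebraMR : Set M) = MA.MR := rfl

end ModuleAlgebra

/-- Proposition 2.6 of [NSW]: in an `A`-module algebra `M` one has
`(a ▷ 1)·m = Σ (a₍₁₎ S(a₍₂₎)) ▷ m`, hence
`(a ▷ 1)(b ▷ 1) = Σ (a₍₁₎ S(a₍₂₎) b) ▷ 1`, and `M_R = A ▷ 1_M` is a unital
subalgebra of `M` closed under the star operation. -/
theorem MR_subalgebra
    {A M : Type} [Ring A] [Algebra ℂ A] [StarRing A] [StarModule ℂ A]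
    [Ring M] [Algebra ℂ M] [StarRing M] [StarModule ℂ M]
    (W : WeakHopfAlgebra A) (MA : ModuleAlgebra W M) :
    (∀ (a : A) (m : M), MA.act a 1 * m = MA.act (W.swIdS a) m)
    ∧ (∀ a b : A, MA.act a 1 * MA.act b 1 = MA.act (W.swIdS a * b) 1)
    ∧ (1 : M) ∈ MA.MR
    ∧ (∀ x ∈ MA.MR, ∀ y ∈ MA.MR, x * y ∈ MA.MR)
    ∧ (∀ x ∈ MA.MR, ∀ y ∈ MA.MR, x + y ∈ MA.MR)
    ∧ (∀ (c : ℂ), ∀ x ∈ MA.MR, c • x ∈ MA.MR)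
    ∧ (∀ x ∈ MA.MR, star x ∈ MA.MR) := by
  rw [← MA.coe_starSubalgebraMR]
  exact ⟨MA.act_one_mul, MA.act_one_mul_act_one, one_mem _, fun _ hx _ hy => mul_mem hx hy,
    fun _ hx _ hy => add_mem hx hy, fun c _ hx => Subalgebra.smul_mem _ hx c,
    fun _ hx => star_mem hx⟩
end
end

section
/- Let M be an A-module algebra over a weak *-Hopf algebra A. For n ∈ M the following four conditions are equivalent: (i) a▷(m·n) = (a▷m)·n for all a ∈ A and m ∈ M; (ii) a▷n = Σ(a₍₁₎·S(a₍₂₎))▷n for all a ∈ A; (iii) a▷(n·m) = n·(a▷m) for all a ∈ A and m ∈ M; (iv) a▷n = Σ(a₍₂₎·S⁻¹(a₍₁₎))▷n for all a ∈ A. -/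
open scoped TensorProduct

noncomputable section

/-! The identity `Σ a₍₁₎ ⊗ a₍₂₎ S(a₍₃₎) = Δ(1)(a ⊗ 1)`, a consequence of the weak unit axiom
`(1 ⊗ Δ 1)(Δ 1 ⊗ 1) = (Δ ⊗ id)(Δ 1)`, turns (ii) into (i): under (ii) the element `a ▷ (m n)`
becomes `Σ (1₍₁₎ a ▷ m)(1₍₂₎ ▷ n) = 1 ▷ ((a ▷ m) n)`. Conversely (i) and (iii) give (ii) at
`m = 1`, because `a ▷ 1 = ε_t(a) ▷ 1` with `ε_t(a) = Σ a₍₁₎ S(a₍₂₎)`. The same unit axiom, through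
`Σ 1₍₁₎ ⊗ ε_t(S⁻¹(1₍₂₎)) = Δ 1`, gives `ε_t(S⁻¹(ε_t a)) = ε_t a`, hence (ii) ⇒ (iv). Finally
`(a ▷ m)* = S(a)* ▷ m*` turns (iv) for `n` into (ii) for `n*`, and (i) for `n*` into (iii) for `n`.
-/

section

open TensorProduct

variable {R A : Type} [CommSemiring R] [Semiring A] [Algebra R A]

lemma map_id_mul'_map_comm_assoc (g : A →ₗ[R] A) (u v : A ⊗[R] A) :
    map LinearMap.id
        (LinearMap.mul' R A ∘ₗ map g LinearMap.id ∘ₗ (TensorProduct.comm R A A).toLinearMap)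
      (TensorProduct.assoc R A A A ((TensorProduct.assoc R A A A).symm (1 ⊗ₜ u) * (v ⊗ₜ 1)))
      = (1 ⊗ₜ LinearMap.mul' R A (map g LinearMap.id (TensorProduct.comm R A A u))) * v := by
  induction u using TensorProduct.induction_on with
  | zero => simp
  | tmul x y =>
    induction v using TensorProduct.induction_on with
    | zero => simp
    | tmul x' y' => simp [mul_assoc]
    | add v w hv hw => simp only [mul_add, map_add, hv, hw, add_tmul]
  | add u w hu hw => simp only [tmul_add, add_mul, map_add, hu, hw]

lemma lid_map_map_id (φ : A →ₗ[R] R) (f : A →ₗ[R] A) (t : A ⊗[R] A) :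
    f (TensorProduct.lid R A (map φ LinearMap.id t))
      = TensorProduct.lid R A (map φ LinearMap.id (map LinearMap.id f t)) := by
  induction t using TensorProduct.induction_on with
  | zero => simp
  | tmul x y => simp
  | add t u ht hu => simp only [map_add, ht, hu]

end

namespace WeakHopfAlgebra

open TensorProduct

variable {A : Type} [Ring A] [Algebra ℂ A] [StarRing A] [StarModule ℂ A] (W : WeakHopfAlgebra A)

lemma Sinv_mul (x y : A) : W.Sinv (x * y) = W.Sinv y * W.Sinv x := by
  simpa only [W.S_Sinv, W.Sinv_S] using congrArg W.Sinv (W.S_antimul (W.Sinv y) (W.Sinv x)).symm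

lemma Sinv_one : W.Sinv 1 = 1 := by
  simpa only [mul_one, W.Sinv_S] using (W.Sinv_mul (W.S 1) 1).symm

lemma swSId_one : W.swSId 1 = 1 := by
  rw [swSId, W.antipode_left, LinearMap.mulLeft_one, LinearMap.comp_id, W.counit_right]

lemma swIdSinv_eq_Sinv_swIdS (x : A) : W.swIdSinv x = W.Sinv (W.swIdS x) := by
  rw [swIdSinv, swIdS]
  induction W.Δ x using TensorProduct.induction_on with
  | zero => simp
  | tmul y z => simp [W.Sinv_mul, W.Sinv_S]
  | add t u ht hu => simp only [map_add, ht, hu]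

lemma swSinvId_eq_Sinv_swSId (x : A) : W.swSinvId x = W.Sinv (W.swSId x) := by
  rw [swSinvId, swSId]
  induction W.Δ x using TensorProduct.induction_on with
  | zero => simp
  | tmul y z => simp [W.Sinv_mul, W.Sinv_S]
  | add t u ht hu => simp only [map_add, ht, hu]

lemma swSinvId_one : W.swSinvId 1 = 1 := by
  rw [swSinvId_eq_Sinv_swSId, swSId_one, Sinv_one]

lemma swIdS_Sinv (x : A) : W.swIdS (W.Sinv x) = W.swSinvId x := by
  have hΔ : W.Δ x = TensorProduct.comm ℂ A A (map W.S W.S (W.Δ (W.Sinv x))) := by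
    rw [← W.S_anticomul, W.S_Sinv]
  have hSinvS : W.Sinv ∘ₗ W.S = LinearMap.id := LinearMap.ext W.Sinv_S
  rw [swSinvId, hΔ, comm_comm, map_map, hSinvS, LinearMap.id_comp, swIdS]

lemma star_swIdS_star (x : A) : star (W.swIdS (star x)) = W.swSinvId x := by
  rw [swIdS, swSinvId, W.Δ_star]
  induction W.Δ x using TensorProduct.induction_on with
  | zero => simp
  | tmul y z => simp [tensorStar, W.S_star]
  | add t u ht hu => simp only [map_add, star_add, ht, hu]

def swIdSLinear : A →ₗ[ℂ] A := LinearMap.mul' ℂ A ∘ₗ map LinearMap.id W.S ∘ₗ W.Δ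

def swSinvIdLinear : A →ₗ[ℂ] A :=
  LinearMap.mul' ℂ A ∘ₗ map W.Sinv LinearMap.id ∘ₗ (TensorProduct.comm ℂ A A).toLinearMap ∘ₗ W.Δ

@[simp] lemma swIdSLinear_apply (x : A) : W.swIdSLinear x = W.swIdS x := rfl

@[simp] lemma swSinvIdLinear_apply (x : A) : W.swSinvIdLinear x = W.swSinvId x := rfl

lemma map_Δ_id_mul (u v : A ⊗[ℂ] A) :
    map W.Δ LinearMap.id (u * v) = map W.Δ LinearMap.id u * map W.Δ LinearMap.id v := by
  induction u using TensorProduct.induction_on with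
  | zero => simp
  | tmul x y =>
    induction v using TensorProduct.induction_on with
    | zero => simp
    | tmul x' y' => simp [W.Δ_mul]
    | add v w hv hw => simp only [mul_add, map_add, hv, hw]
  | add u w hu hw => simp only [add_mul, map_add, hu, hw]

lemma map_id_swSinvIdLinear_Δ_one : map LinearMap.id W.swSinvIdLinear (W.Δ 1) = W.Δ 1 := by
  have hΔΔ := W.coassoc 1
  rw [← W.unit_weak'] at hΔΔ
  calc map LinearMap.id W.swSinvIdLinear (W.Δ 1)
      = map LinearMap.id
          (LinearMap.mul' ℂ A ∘ₗ map W.Sinv LinearMap.id ∘ₗ (TensorProduct.comm ℂ A A).toLinearMap)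
          (map LinearMap.id W.Δ (W.Δ 1)) := by rw [map_map]; rfl
    _ = (1 ⊗ₜ W.swSinvId 1) * W.Δ 1 := by rw [← hΔΔ, map_id_mul'_map_comm_assoc]; rfl
    _ = W.Δ 1 := by rw [swSinvId_one, ← Algebra.TensorProduct.one_def, one_mul]

lemma swIdS_swIdSinv (a : A) : W.swIdS (W.swIdSinv a) = W.swIdS a := by
  rw [swIdSinv_eq_Sinv_swIdS, swIdS_Sinv, ← swSinvIdLinear_apply, swIdS, W.antipode_right,
    lid_map_map_id, map_id_swSinvIdLinear_Δ_one]

lemma map_rid_counit_assoc_symm_mul (v : A ⊗[ℂ] A) :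
    map ((TensorProduct.rid ℂ A).toLinearMap ∘ₗ map LinearMap.id W.ε) LinearMap.id
      ((TensorProduct.assoc ℂ A A A).symm (1 ⊗ₜ W.Δ 1) * (v ⊗ₜ 1))
      = map LinearMap.id W.swIdSLinear v := by
  induction v using TensorProduct.induction_on with
  | zero => simp
  | tmul x y =>
    rw [map_tmul, LinearMap.id_apply, swIdSLinear_apply, swIdS, W.antipode_right]
    induction W.Δ 1 using TensorProduct.induction_on with
    | zero => simp
    | tmul u w => simp [smul_tmul']
    | add t u ht hu => simp only [tmul_add, map_add, add_mul, ht, hu]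
  | add v w hv hw => simp only [add_tmul, mul_add, map_add, hv, hw]

lemma map_id_swIdSLinear_Δ (a : A) :
    map LinearMap.id W.swIdSLinear (W.Δ a) = W.Δ 1 * (a ⊗ₜ 1) := by
  have hcounit : map ((TensorProduct.rid ℂ A).toLinearMap ∘ₗ map LinearMap.id W.ε) LinearMap.id
      ∘ₗ map W.Δ LinearMap.id = (LinearMap.id : A ⊗[ℂ] A →ₗ[ℂ] A ⊗[ℂ] A) := by
    have hε : (TensorProduct.rid ℂ A).toLinearMap ∘ₗ map LinearMap.id W.ε ∘ₗ W.Δ = LinearMap.id :=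
      LinearMap.ext W.counit_right
    rw [← map_comp, LinearMap.comp_assoc, hε, LinearMap.id_comp, map_id]
  have hΔ : map W.Δ LinearMap.id (W.Δ 1 * (a ⊗ₜ 1))
      = (TensorProduct.assoc ℂ A A A).symm (1 ⊗ₜ W.Δ 1) * (W.Δ a ⊗ₜ 1) := by
    rw [map_Δ_id_mul, ← W.unit_weak', mul_assoc, map_tmul, Algebra.TensorProduct.tmul_mul_tmul,
      ← W.Δ_mul, one_mul, LinearMap.id_apply, mul_one]
  rw [← map_rid_counit_assoc_symm_mul, ← hΔ, ← LinearMap.comp_apply, hcounit, LinearMap.id_apply]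

end WeakHopfAlgebra

namespace ModuleAlgebra

open TensorProduct

variable {A : Type} [Ring A] [Algebra ℂ A] [StarRing A] [StarModule ℂ A]
variable {M : Type} [Ring M] [Algebra ℂ M] [StarRing M] [StarModule ℂ M]
variable {W : WeakHopfAlgebra A} (MA : ModuleAlgebra W M)

lemma mul'_map_act_flip_mul_tmul_one (g : A →ₗ[ℂ] M) (t : A ⊗[ℂ] A) (a : A) (m : M) :
    LinearMap.mul' ℂ M (map (MA.act.flip m) g (t * (a ⊗ₜ 1)))
      = LinearMap.mul' ℂ M (map (MA.act.flip (MA.act a m)) g t) := by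
  induction t using TensorProduct.induction_on with
  | zero => simp
  | tmul x y => simp [MA.act_mul]
  | add t u ht hu => simp only [add_mul, map_add, ht, hu]

variable {n : M}

lemma act_eq_act_swIdS_of_mem_fixed (h : n ∈ MA.fixed) (a : A) :
    MA.act a n = MA.act (W.swIdS a) n := by
  have h₁ := h a 1
  have h₂ := h (W.swIdS a) 1
  rw [one_mul] at h₁ h₂
  rw [h₁, h₂, MA.act_unit]

lemma act_eq_act_swIdS_of_act_mul_left (h : ∀ (a : A) (m : M), MA.act a (n * m) = n * MA.act a m)
    (a : A) : MA.act a n = MA.act (W.swIdS a) n := by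
  have h₁ := h a 1
  have h₂ := h (W.swIdS a) 1
  rw [mul_one] at h₁ h₂
  rw [h₁, h₂, MA.act_unit]

lemma mem_fixed_of_act_eq_act_swIdS (h : ∀ a : A, MA.act a n = MA.act (W.swIdS a) n) :
    n ∈ MA.fixed := by
  intro a m
  have hn : MA.act.flip n ∘ₗ W.swIdSLinear = MA.act.flip n := LinearMap.ext fun b => (h b).symm
  calc MA.act a (m * n)
      = LinearMap.mul' ℂ M (map (MA.act.flip m) (MA.act.flip n) (W.Δ a)) := MA.act_mul' a m n
    _ = LinearMap.mul' ℂ M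
          (map (MA.act.flip m) (MA.act.flip n) (map LinearMap.id W.swIdSLinear (W.Δ a))) := by
        rw [map_map, LinearMap.comp_id, hn]
    _ = LinearMap.mul' ℂ M (map (MA.act.flip (MA.act a m)) (MA.act.flip n) (W.Δ 1)) := by
        rw [W.map_id_swIdSLinear_Δ, mul'_map_act_flip_mul_tmul_one]
    _ = MA.act 1 (MA.act a m * n) := (MA.act_mul' 1 _ n).symm
    _ = MA.act a m * n := MA.act_one _

lemma act_eq_act_swIdSinv_of_act_eq_act_swIdS (h : ∀ a : A, MA.act a n = MA.act (W.swIdS a) n)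
    (a : A) : MA.act a n = MA.act (W.swIdSinv a) n := by
  rw [h a, h (W.swIdSinv a), W.swIdS_swIdSinv]

lemma act_star_eq_act_swIdS_of_act_eq_act_swIdSinv
    (h : ∀ a : A, MA.act a n = MA.act (W.swIdSinv a) n) (b : A) :
    MA.act b (star n) = MA.act (W.swIdS b) (star n) := by
  set a := star (W.S b)
  have hb : star (W.S a) = b := by rw [W.S_star, W.Sinv_S]
  have hstar : star (W.S (W.swIdSinv a)) = W.swIdS b := by
    rw [W.swIdSinv_eq_Sinv_swIdS, W.S_Sinv, W.star_swIdS_star, ← W.swIdS_Sinv, W.Sinv_S]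
  calc MA.act b (star n)
      = star (MA.act a n) := by rw [MA.act_star, hb]
    _ = star (MA.act (W.swIdSinv a) n) := by rw [h a]
    _ = MA.act (W.swIdS b) (star n) := by rw [MA.act_star, hstar]

lemma act_mul_left_of_star_mem_fixed (h : star n ∈ MA.fixed) (a : A) (m : M) :
    MA.act a (n * m) = n * MA.act a m := by
  apply star_injective
  calc star (MA.act a (n * m))
      = MA.act (star (W.S a)) (star m * star n) := by rw [MA.act_star, star_mul]
    _ = MA.act (star (W.S a)) (star m) * star n := h _ _
    _ = star (n * MA.act a m) := by rw [← MA.act_star, star_mul]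

end ModuleAlgebra

/-- Proposition 2.11 of [NSW]: for `n ∈ M` the four characterizations of
being a fixed point under the `A`-action are equivalent:
(i) `a ▷ (m·n) = (a ▷ m)·n`, (ii) `a ▷ n = Σ (a₍₁₎ S(a₍₂₎)) ▷ n`,
(iii) `a ▷ (n·m) = n·(a ▷ m)`, (iv) `a ▷ n = Σ (a₍₂₎ S⁻¹(a₍₁₎)) ▷ n`. -/
theorem fixed_point_conditions_equiv
    {A M : Type} [Ring A] [Algebra ℂ A] [StarRing A] [StarModule ℂ A]
    [Ring M] [Algebra ℂ M] [StarRing M] [StarModule ℂ M]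
    (W : WeakHopfAlgebra A) (MA : ModuleAlgebra W M) (n : M) :
    ((∀ (a : A) (m : M), MA.act a (m * n) = MA.act a m * n) ↔
      (∀ a : A, MA.act a n = MA.act (W.swIdS a) n))
    ∧ ((∀ a : A, MA.act a n = MA.act (W.swIdS a) n) ↔
      (∀ (a : A) (m : M), MA.act a (n * m) = n * MA.act a m))
    ∧ ((∀ (a : A) (m : M), MA.act a (n * m) = n * MA.act a m) ↔
      (∀ a : A, MA.act a n = MA.act (W.swIdSinv a) n)) := by
  have h4_3 (h4 : ∀ a : A, MA.act a n = MA.act (W.swIdSinv a) n) :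
      ∀ (a : A) (m : M), MA.act a (n * m) = n * MA.act a m :=
    MA.act_mul_left_of_star_mem_fixed
      (MA.mem_fixed_of_act_eq_act_swIdS (MA.act_star_eq_act_swIdS_of_act_eq_act_swIdSinv h4))
  exact ⟨⟨MA.act_eq_act_swIdS_of_mem_fixed, MA.mem_fixed_of_act_eq_act_swIdS⟩,
    ⟨fun h2 => h4_3 (MA.act_eq_act_swIdSinv_of_act_eq_act_swIdS h2),
      MA.act_eq_act_swIdS_of_act_mul_left⟩,
    ⟨fun h3 => MA.act_eq_act_swIdSinv_of_act_eq_act_swIdS (MA.act_eq_act_swIdS_of_act_mul_left h3),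
      h4_3⟩⟩
end
end

section
/- Let A be a weak *-Hopf algebra with a normalized Haar integral h. For a left integral l ∈ A set d_R(l) := Σ S(l₍₁₎)·l₍₂₎ and d_L(l) := Σ S⁻¹(l₍₂₎)·l₍₁₎. Then: (i) h·a is a left integral for every a ∈ A; (ii) every left integral l satisfies d_R(l) ∈ A_R, d_L(l) ∈ A_L, and l = h·d_R(l) = h·d_L(l); (iii) d_R(h·a) = a for all a ∈ A_R and d_L(h·a) = a for all a ∈ A_L; consequently right multiplication by elements of A_R (equivalently of A_L) on h gives a linear bijection from A_R (resp. A_L) onto the space of left integrals of A. -/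
open scoped TensorProduct

noncomputable section

/-!
For a left integral `l`, `h · l = (Σ h₍₁₎ S(h₍₂₎)) · l = l`, while `h` being a right integral gives
`h · l = h · d_R(l)`; so `l = h · d_R(l)`, and `d_R(l) = (id ⊗ ε(l ·))(Δ 1)` lies in `A_R`.
Since `Δ a = Δ 1 · (1 ⊗ a)` on `A_R` and `Δ a = Δ 1 · (a ⊗ 1)` on `A_L`, `d_R` is the identity on
`A_R` and agrees with `S` on `A_L`. Weak multiplicativity of `ε` gives `ε(d_R(x) z) = ε(x z)`, hence
`d_R(h a) = d_R(d_R(h) a) = d_R(a)`, which is `a` for `a ∈ A_R`. Everything about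
`d_L = S⁻¹ ∘ d_R` follows by applying `S⁻¹`, using `h a = h S(a)` for `a ∈ A_L`.
-/

open TensorProduct

section Slices

variable {M N P : Type} [AddCommGroup M] [Module ℂ M] [AddCommGroup N] [Module ℂ N]
  [AddCommGroup P] [Module ℂ P]

lemma rid_map_map_left (f : M →ₗ[ℂ] N) (φ : P →ₗ[ℂ] ℂ) (t : M ⊗[ℂ] P) :
    TensorProduct.rid ℂ N (map LinearMap.id φ (map f LinearMap.id t))
      = f (TensorProduct.rid ℂ M (map LinearMap.id φ t)) := by
  induction t using TensorProduct.induction_on with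
  | zero => simp
  | add t t' ht ht' => simp only [map_add, ht, ht']
  | tmul x y => simp

lemma lid_map_map_right (f : M →ₗ[ℂ] N) (φ : P →ₗ[ℂ] ℂ) (t : P ⊗[ℂ] M) :
    TensorProduct.lid ℂ N (map φ LinearMap.id (map LinearMap.id f t))
      = f (TensorProduct.lid ℂ M (map φ LinearMap.id t)) := by
  induction t using TensorProduct.induction_on with
  | zero => simp
  | add t t' ht ht' => simp only [map_add, ht, ht']
  | tmul x y => simp

end Slices

section SlicesOfProducts

variable {B C D : Type} [Ring B] [Algebra ℂ B] [Ring C] [Algebra ℂ C] [Ring D] [Algebra ℂ D]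

lemma rid_map_mul_assoc_symm (φ : D →ₗ[ℂ] ℂ) (u : B ⊗[ℂ] C) (v : C ⊗[ℂ] D) :
    TensorProduct.rid ℂ (B ⊗[ℂ] C)
        (map LinearMap.id φ ((u ⊗ₜ[ℂ] (1 : D)) * (TensorProduct.assoc ℂ B C D).symm ((1 : B) ⊗ₜ v)))
      = u * ((1 : B) ⊗ₜ TensorProduct.rid ℂ C (map LinearMap.id φ v)) := by
  induction u using TensorProduct.induction_on with
  | zero => simp
  | add u u' hu hu' => simp only [add_tmul, add_mul, map_add, hu, hu']
  | tmul x y =>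
    induction v using TensorProduct.induction_on with
    | zero => simp
    | add v v' hv hv' => simp only [tmul_add, map_add, mul_add, hv, hv']
    | tmul z w => simp [Algebra.TensorProduct.tmul_mul_tmul, smul_tmul']

lemma lid_map_assoc_mul (φ : B →ₗ[ℂ] ℂ) (u : B ⊗[ℂ] C) (v : C ⊗[ℂ] D) :
    TensorProduct.lid ℂ (C ⊗[ℂ] D) (map φ LinearMap.id (TensorProduct.assoc ℂ B C D
        ((TensorProduct.assoc ℂ B C D).symm ((1 : B) ⊗ₜ v) * (u ⊗ₜ[ℂ] (1 : D)))))
      = v * (TensorProduct.lid ℂ C (map φ LinearMap.id u) ⊗ₜ (1 : D)) := by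
  induction u using TensorProduct.induction_on with
  | zero => simp
  | add u u' hu hu' => simp only [add_tmul, mul_add, map_add, hu, hu']
  | tmul x y =>
    induction v using TensorProduct.induction_on with
    | zero => simp
    | add v v' hv hv' => simp only [tmul_add, map_add, add_mul, hv, hv']
    | tmul z w => simp [Algebra.TensorProduct.tmul_mul_tmul, smul_tmul']

end SlicesOfProducts

namespace WeakHopfAlgebra

variable {A : Type} [Ring A] [Algebra ℂ A] [StarRing A] [StarModule ℂ A] (W : WeakHopfAlgebra A)

section SweedlerSums

variable {ι : Type} (s : Finset ι) (f g : ι → A) {x : A} (hx : W.Δ x = ∑ i ∈ s, f i ⊗ₜ[ℂ] g i)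
include hx

lemma swSId_eq_sum_s8 : W.swSId x = ∑ i ∈ s, W.S (f i) * g i := by
  simp [swSId, hx]

lemma swIdS_eq_sum : W.swIdS x = ∑ i ∈ s, f i * W.S (g i) := by
  simp [swIdS, hx]

lemma swSinvId_eq_sum : W.swSinvId x = ∑ i ∈ s, W.Sinv (g i) * f i := by
  simp [swSinvId, hx]

end SweedlerSums

lemma S_swSinvId (x : A) : W.S (W.swSinvId x) = W.swSId x := by
  obtain ⟨T, hT⟩ := TensorProduct.exists_finset (W.Δ x)
  simp [W.swSinvId_eq_sum T _ _ hT, W.swSId_eq_sum_s8 T _ _ hT, S_antimul, S_Sinv]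

lemma swSinvId_eq_swIdS_Sinv (x : A) : W.swSinvId x = W.swIdS (W.Sinv x) := by
  obtain ⟨T, hT⟩ := TensorProduct.exists_finset (W.Δ (W.Sinv x))
  have hx : W.Δ x = ∑ p ∈ T, W.S p.2 ⊗ₜ[ℂ] W.S p.1 := by
    simpa [W.S_Sinv, hT] using W.S_anticomul (W.Sinv x)
  simp [W.swSinvId_eq_sum T _ _ hx, W.swIdS_eq_sum T _ _ hT, Sinv_S]

lemma swSId_mem_AR (x : A) : W.swSId x ∈ W.AR :=
  ⟨W.ε ∘ₗ LinearMap.mulLeft ℂ x, W.antipode_left x⟩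

lemma swSinvId_mem_AL (x : A) : W.swSinvId x ∈ W.AL :=
  ⟨W.ε ∘ₗ LinearMap.mulRight ℂ (W.Sinv x), by rw [swSinvId_eq_swIdS_Sinv]; exact W.antipode_right _⟩

lemma Δ_eq_of_mem_AR {a : A} (ha : a ∈ W.AR) : W.Δ a = W.Δ 1 * (1 ⊗ₜ a) := by
  obtain ⟨φ, rfl⟩ := ha
  rw [← rid_map_map_left, ← W.unit_weak, rid_map_mul_assoc_symm]

lemma Δ_eq_of_mem_AL {a : A} (ha : a ∈ W.AL) : W.Δ a = W.Δ 1 * (a ⊗ₜ 1) := by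
  obtain ⟨φ, rfl⟩ := ha
  rw [← lid_map_map_right, ← W.coassoc, ← W.unit_weak', lid_map_assoc_mul]

lemma mul'_map_S_mul_one_tmul (u : A ⊗[ℂ] A) (a : A) :
    LinearMap.mul' ℂ A (map W.S LinearMap.id (u * (1 ⊗ₜ a)))
      = LinearMap.mul' ℂ A (map W.S LinearMap.id u) * a := by
  induction u using TensorProduct.induction_on with
  | zero => simp
  | add u u' hu hu' => simp only [add_mul, map_add, hu, hu']
  | tmul x y => simp [mul_assoc]

lemma mul'_map_S_mul_tmul_one (u : A ⊗[ℂ] A) (a : A) :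
    LinearMap.mul' ℂ A (map W.S LinearMap.id (u * (a ⊗ₜ 1)))
      = W.S a * LinearMap.mul' ℂ A (map W.S LinearMap.id u) := by
  induction u using TensorProduct.induction_on with
  | zero => simp
  | add u u' hu hu' => simp only [add_mul, map_add, mul_add, hu, hu']
  | tmul x y => simp [S_antimul, mul_assoc]

lemma swSId_of_mem_AR {a : A} (ha : a ∈ W.AR) : W.swSId a = a := by
  rw [swSId, W.Δ_eq_of_mem_AR ha, mul'_map_S_mul_one_tmul, ← swSId, swSId_one, one_mul]

lemma swSId_of_mem_AL {a : A} (ha : a ∈ W.AL) : W.swSId a = W.S a := by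
  rw [swSId, W.Δ_eq_of_mem_AL ha, mul'_map_S_mul_tmul_one, ← swSId, swSId_one, mul_one]

lemma ε_swSId_mul (x z : A) : W.ε (W.swSId x * z) = W.ε (x * z) := by
  have slice : ∀ t : A ⊗[ℂ] A,
      W.ε (TensorProduct.rid ℂ A (map LinearMap.id (W.ε ∘ₗ LinearMap.mulLeft ℂ x) t) * z)
        = TensorProduct.lid ℂ ℂ
            (map (W.ε ∘ₗ LinearMap.mulRight ℂ z) (W.ε ∘ₗ LinearMap.mulLeft ℂ x) t) := by
    intro t
    induction t using TensorProduct.induction_on with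
    | zero => simp
    | add t t' ht ht' => simp only [map_add, add_mul, ht, ht']
    | tmul p q => simp [mul_comm]
  rw [swSId, antipode_left, slice, ← W.counit_weak', mul_one]

lemma swSId_swSId_mul (x y : A) : W.swSId (W.swSId x * y) = W.swSId (x * y) := by
  have : W.ε ∘ₗ LinearMap.mulLeft ℂ (W.swSId x * y) = W.ε ∘ₗ LinearMap.mulLeft ℂ (x * y) := by
    ext z
    simp only [LinearMap.comp_apply, LinearMap.mulLeft_apply, mul_assoc, ε_swSId_mul]
  rw [swSId, antipode_left, this]
  exact (W.antipode_left _).symm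

lemma swSId_mul_of_swSId_eq_one {h : A} (h1 : W.swSId h = 1) (a : A) :
    W.swSId (h * a) = W.swSId a := by
  rw [← swSId_swSId_mul, h1, one_mul]

variable {W}

lemma IsLeftIntegral.mul_right {l : A} (hl : W.IsLeftIntegral l) (a : A) :
    W.IsLeftIntegral (l * a) := fun b => by
  rw [← mul_assoc, ← mul_assoc, hl b]

lemma IsRightIntegral.mul_of_mem_AL {r a : A} (hr : W.IsRightIntegral r) (ha : a ∈ W.AL) :
    r * a = r * W.S a := by
  rw [hr a, W.swSId_of_mem_AL ha]

section Recovery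

variable {h l : A} (hl : W.IsLeftIntegral l) (hR : W.IsRightIntegral h) (h1 : W.swIdS h = 1)
include hl hR h1

lemma IsLeftIntegral.eq_mul_swSId : l = h * W.swSId l :=
  calc l = W.swIdS h * l := by rw [h1, one_mul]
    _ = h * l := (hl h).symm
    _ = h * W.swSId l := hR l

lemma IsLeftIntegral.eq_mul_swSinvId : l = h * W.swSinvId l :=
  calc l = h * W.swSId l := hl.eq_mul_swSId hR h1
    _ = h * W.swSinvId l := by rw [hR.mul_of_mem_AL (W.swSinvId_mem_AL l), S_swSinvId]

end Recovery

end WeakHopfAlgebra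

/-- Lemma 2.22 of [NSW] ("Radon–Nikodym derivatives" for left integrals):
with `d_R(l) = Σ S(l₍₁₎)·l₍₂₎` and `d_L(l) = Σ S⁻¹(l₍₂₎)·l₍₁₎`:
(i) `h·a` is a left integral for every `a`;
(ii) every left integral `l` satisfies `d_R(l) ∈ A_R`, `d_L(l) ∈ A_L` and
`l = h·d_R(l) = h·d_L(l)`;
(iii) `d_R(h·a) = a` for `a ∈ A_R` and `d_L(h·a) = a` for `a ∈ A_L`, so that
right multiplication on `h` is a bijection from `A_R` (resp. `A_L`) onto the
space of left integrals. -/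
theorem left_integrals_structure
    {A : Type} [Ring A] [Algebra ℂ A] [StarRing A] [StarModule ℂ A]
    (W : WeakHopfAlgebra A) (h : A) (hh : W.IsHaar h) :
    (∀ a : A, W.IsLeftIntegral (h * a))
    ∧ (∀ l : A, W.IsLeftIntegral l →
        W.swSId l ∈ W.AR ∧ W.swSinvId l ∈ W.AL ∧ l = h * W.swSId l ∧ l = h * W.swSinvId l)
    ∧ (∀ a ∈ W.AR, W.swSId (h * a) = a)
    ∧ (∀ a ∈ W.AL, W.swSinvId (h * a) = a)
    ∧ Set.BijOn (fun a : A => h * a) W.AR {l | W.IsLeftIntegral l}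
    ∧ Set.BijOn (fun a : A => h * a) W.AL {l | W.IsLeftIntegral l} := by
  obtain ⟨hL, hR, hs1, ht1, -⟩ := hh
  have dR_mul : ∀ a ∈ W.AR, W.swSId (h * a) = a := fun a ha => by
    rw [W.swSId_mul_of_swSId_eq_one hs1, W.swSId_of_mem_AR ha]
  have dL_mul : ∀ a ∈ W.AL, W.swSinvId (h * a) = a := fun a ha => by
    rw [W.swSinvId_eq_Sinv_swSId, W.swSId_mul_of_swSId_eq_one hs1, W.swSId_of_mem_AL ha,
      W.Sinv_S]
  refine ⟨hL.mul_right, fun l hl => ⟨W.swSId_mem_AR l, W.swSinvId_mem_AL l,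
    hl.eq_mul_swSId hR ht1, hl.eq_mul_swSinvId hR ht1⟩, dR_mul, dL_mul, ?_, ?_⟩
  · exact Set.InvOn.bijOn ⟨dR_mul, fun l hl => (hl.eq_mul_swSId hR ht1).symm⟩
      (fun a _ => hL.mul_right a) (fun l _ => W.swSId_mem_AR l)
  · exact Set.InvOn.bijOn ⟨dL_mul, fun l hl => (hl.eq_mul_swSinvId hR ht1).symm⟩
      (fun a _ => hL.mul_right a) (fun l _ => W.swSinvId_mem_AL l)
end
end
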